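/- Let ν ≥ 3, let Ψ be a set of coverings with #Ψ ≥ 2, and let (E,E') be a nontrivial bipartition of Γ_{2ν} with min{#E, #E'} = 2. If Ψ is decomposable via E, then F_Ψ splits across the bipartition (E,E'). (Indeed, if say E' = {a,b} with a ∈ A, b ∈ B, then necessarily ψ(a) = b for all ψ ∈ Ψ and X_b − X_a divides F_Ψ.) -/
import Mathlib


open MvPolynomial Finset

noncomputable section

/-- The odd-labelled site `2t−1` of the paper (`t`-th site of sublattice `A`),
zero-indexed as `2t` in `Fin (2ν)`. -/
def siteA (ν : ℕ) (t : Fin ν) : Fin (2 * ν) := ⟨2 * t.val, by have := t.isLt; omega⟩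

/-- The even-labelled site `2t` of the paper (`t`-th site of sublattice `B`),
zero-indexed as `2t+1` in `Fin (2ν)`. -/
def siteB (ν : ℕ) (t : Fin ν) : Fin (2 * ν) := ⟨2 * t.val + 1, by have := t.isLt; omega⟩

/-- A covering is a bijection `ψ : A → B`; it is encoded by the permutation
`σ` of `Fin ν` with `ψ(siteA t) = siteB (σ t)`.  Its covering polynomial is
`F_ψ = ∏_{a∈A} (X_{ψ(a)} − X_a)`. -/
def covPoly (ν : ℕ) (σ : Equiv.Perm (Fin ν)) : MvPolynomial (Fin (2 * ν)) ℂ :=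
  ∏ t : Fin ν, (X (siteB ν (σ t)) - X (siteA ν t))

/-- `F` splits across the bipartition `(E, Eᶜ)`. -/
def SplitsAcross {n : ℕ} (F : MvPolynomial (Fin n) ℂ) (E : Finset (Fin n)) : Prop :=
  ∃ p q : MvPolynomial (Fin n) ℂ, F = p * q ∧ p.vars ⊆ E ∧ q.vars ⊆ Eᶜ

/-- `ψ(E ∩ A) = E ∩ B` for the covering `ψ` encoded by `σ`
(here `E ∩ B` is the set of odd-indexed, i.e. `B`-sublattice, elements of `E`). -/
def MapsCut (ν : ℕ) (σ : Equiv.Perm (Fin ν)) (E : Finset (Fin (2 * ν))) : Prop :=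
  ((Finset.univ.filter (fun t => siteA ν t ∈ E)).image fun t => siteB ν (σ t))
    = E.filter (fun x => x.val % 2 = 1)


/-- The (unnormalized) RVB polynomial `F_Ψ = Σ_{ψ∈Ψ} F_ψ`. -/
def rvbPoly (ν : ℕ) (Ψ : Finset (Equiv.Perm (Fin ν))) : MvPolynomial (Fin (2 * ν)) ℂ :=
  ∑ σ ∈ Ψ, covPoly ν σ

/- ### Auxiliary lemmas -/

lemma siteA_inj (ν : ℕ) : Function.Injective (siteA ν) := by
  intro t t' h
  simp only [siteA, Fin.mk.injEq, Fin.ext_iff] at h ⊢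
  omega

lemma siteB_inj (ν : ℕ) : Function.Injective (siteB ν) := by
  intro t t' h
  simp only [siteB, Fin.mk.injEq, Fin.ext_iff] at h ⊢
  omega

lemma siteB_ne_siteA (ν : ℕ) (t t' : Fin ν) : siteB ν t ≠ siteA ν t' := by
  simp only [siteA, siteB, ne_eq, Fin.mk.injEq]
  omega

lemma vars_X_sub {n : ℕ} (b a : Fin n) :
    (X b - X a : MvPolynomial (Fin n) ℂ).vars ⊆ {b, a} := by
  refine (vars_sub_subset _).trans ?_
  rw [vars_X, vars_X]
  intro x hx
  rcases Finset.mem_union.1 hx with hx | hx <;>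
    · simp only [Finset.mem_singleton] at hx
      simp [hx]

/-- Structural lemma: the small side of the cut is `{siteA s, siteB u}` and every
covering in `Ψ` pairs `s` with `u`. -/
lemma key_lemma (ν : ℕ) (Ψ : Finset (Equiv.Perm (Fin ν))) (hΨ : 2 ≤ Ψ.card)
    (E : Finset (Fin (2 * ν)))
    (hmin : min E.card Eᶜ.card = 2)
    (hdec : ∀ σ ∈ Ψ, MapsCut ν σ E) :
    ∃ s u, (∀ σ ∈ Ψ, σ s = u) ∧
      (({siteA ν s, siteB ν u} : Finset (Fin (2 * ν))) = E ∨
       ({siteA ν s, siteB ν u} : Finset (Fin (2 * ν))) = Eᶜ) := by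
  obtain ⟨σ₀, hσ₀⟩ : Ψ.Nonempty := Finset.card_pos.1 (by omega)
  set TA : Finset (Fin ν) := Finset.univ.filter (fun t => siteA ν t ∈ E) with hTA
  -- E's even part is the image of TA under siteA
  have hEA : E.filter (fun x => x.val % 2 = 0) = TA.image (siteA ν) := by
    ext x
    simp only [Finset.mem_filter, Finset.mem_image, hTA, Finset.mem_univ, true_and]
    constructor
    · rintro ⟨hxE, hx2⟩
      have hlt : x.val / 2 < ν := by have := x.isLt; omega
      refine ⟨⟨x.val / 2, hlt⟩, ?_, ?_⟩
      · have : siteA ν ⟨x.val / 2, hlt⟩ = x := by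
          simp only [siteA, Fin.ext_iff]; omega
        rw [this]; exact hxE
      · simp only [siteA, Fin.ext_iff]; omega
    · rintro ⟨t, htE, rfl⟩
      exact ⟨htE, by simp [siteA, Nat.mul_mod_right]⟩
  have hcardEA : (E.filter (fun x => x.val % 2 = 0)).card = TA.card := by
    rw [hEA, Finset.card_image_of_injective _ (siteA_inj ν)]
  have hBinj : ∀ σ : Equiv.Perm (Fin ν), Function.Injective (fun t => siteB ν (σ t)) :=
    fun σ => (siteB_inj ν).comp σ.injective
  have hcardEB : (E.filter (fun x => x.val % 2 = 1)).card = TA.card := by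
    rw [← hdec σ₀ hσ₀, Finset.card_image_of_injective _ (hBinj σ₀)]
  have hsplit : E.card = 2 * TA.card := by
    have := Finset.card_filter_add_card_filter_not
      (s := E) (p := fun x => x.val % 2 = 0)
    have heq : E.filter (fun x => ¬ x.val % 2 = 0) = E.filter (fun x => x.val % 2 = 1) := by
      ext x
      simp only [Finset.mem_filter]
      exact and_congr_right fun _ => by omega
    rw [heq] at this
    omega
  have hcompl : Eᶜ.card = 2 * ν - E.card := by
    rw [Finset.card_compl]
    simp
  have hEle : E.card ≤ 2 * ν := le_trans (Finset.card_le_card (Finset.subset_univ E)) (by simp)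
  have hcases : E.card = 2 ∨ Eᶜ.card = 2 := by
    rcases le_total E.card Eᶜ.card with h | h
    · left; rwa [min_eq_left h] at hmin
    · right; rwa [min_eq_right h] at hmin
  rcases hcases with hc | hc
  · -- E = {siteA s, siteB u}
    have hTA1 : TA.card = 1 := by omega
    obtain ⟨s, hs⟩ := Finset.card_eq_one.1 hTA1
    have hsA : siteA ν s ∈ E := by
      have : s ∈ TA := hs ▸ Finset.mem_singleton_self s
      simpa [hTA] using this
    set u := σ₀ s with hu
    have hEB : ∀ σ ∈ Ψ, E.filter (fun x => x.val % 2 = 1) = {siteB ν (σ s)} := by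
      intro σ hσ
      rw [← hdec σ hσ, ← hTA, hs, Finset.image_singleton]
    have hσs : ∀ σ ∈ Ψ, σ s = u := by
      intro σ hσ
      have h1 := hEB σ hσ
      have h2 := hEB σ₀ hσ₀
      rw [h2] at h1
      have := Finset.singleton_inj.1 h1.symm
      exact siteB_inj ν this
    have hsB : siteB ν u ∈ E := by
      have : siteB ν u ∈ E.filter (fun x => x.val % 2 = 1) := by
        rw [hEB σ₀ hσ₀]; simp [hu]
      exact (Finset.mem_filter.1 this).1
    refine ⟨s, u, hσs, Or.inl ?_⟩
    have hsub : ({siteA ν s, siteB ν u} : Finset (Fin (2 * ν))) ⊆ E := by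
      intro x hx
      rcases Finset.mem_insert.1 hx with rfl | hx
      · exact hsA
      · rw [Finset.mem_singleton] at hx; exact hx ▸ hsB
    have hcard2 : ({siteA ν s, siteB ν u} : Finset (Fin (2 * ν))).card = 2 := by
      rw [Finset.card_insert_of_notMem (by simp [(siteB_ne_siteA ν u s).symm]),
        Finset.card_singleton]
    exact Finset.eq_of_subset_of_card_le hsub (by omega)
  · -- Eᶜ = {siteA s, siteB u}
    have hTAc : TAᶜ.card = 1 := by
      have h1 : TA.card ≤ ν := le_trans (Finset.card_le_card (Finset.subset_univ TA)) (by simp)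
      rw [Finset.card_compl]
      simp only [Fintype.card_fin]
      omega
    obtain ⟨s, hs⟩ := Finset.card_eq_one.1 hTAc
    have hsTA : s ∉ TA := by
      have : s ∈ TAᶜ := hs ▸ Finset.mem_singleton_self s
      simpa using this
    have hsA : siteA ν s ∈ Eᶜ := by
      simp only [hTA, Finset.mem_filter, Finset.mem_univ, true_and] at hsTA
      simpa using hsTA
    have hsB : ∀ σ ∈ Ψ, siteB ν (σ s) ∈ Eᶜ := by
      intro σ hσ
      rw [Finset.mem_compl]
      intro hmem
      have : siteB ν (σ s) ∈ E.filter (fun x => x.val % 2 = 1) := by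
        simp only [Finset.mem_filter]
        exact ⟨hmem, by simp [siteB]⟩
      rw [← hdec σ hσ] at this
      obtain ⟨t, htTA, hteq⟩ := Finset.mem_image.1 this
      have : t = s := σ.injective (siteB_inj ν hteq)
      exact hsTA (this ▸ (Finset.mem_filter.1 htTA |>.2 |> fun h => by
        simpa [hTA] using htTA))
    set u := σ₀ s with hu
    have hpairc : ({siteA ν s, siteB ν u} : Finset (Fin (2 * ν))) = Eᶜ := by
      have hsub : ({siteA ν s, siteB ν u} : Finset (Fin (2 * ν))) ⊆ Eᶜ := by
        intro x hx
        rcases Finset.mem_insert.1 hx with rfl | hx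
        · exact hsA
        · rw [Finset.mem_singleton] at hx; exact hx ▸ hsB σ₀ hσ₀
      have hcard2 : ({siteA ν s, siteB ν u} : Finset (Fin (2 * ν))).card = 2 := by
        rw [Finset.card_insert_of_notMem (by simp [(siteB_ne_siteA ν u s).symm]),
          Finset.card_singleton]
      exact Finset.eq_of_subset_of_card_le hsub (by omega)
    refine ⟨s, u, ?_, Or.inr hpairc⟩
    intro σ hσ
    have h1 : siteB ν (σ s) ∈ ({siteA ν s, siteB ν u} : Finset (Fin (2 * ν))) :=
      hpairc ▸ hsB σ hσ
    rcases Finset.mem_insert.1 h1 with h | h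
    · exact absurd h (siteB_ne_siteA ν (σ s) s)
    · rw [Finset.mem_singleton] at h
      exact siteB_inj ν h

/-- Theorem 3.1(v)(b): for a nontrivial bipartition `(E,E')` with
`min{#E, #E'} = 2`, if `Ψ` is decomposable via `E`, then `F_Ψ` splits across
`(E,E')`. -/
theorem stmt_9 (ν : ℕ) (hν : 3 ≤ ν) (Ψ : Finset (Equiv.Perm (Fin ν)))
    (hΨ : 2 ≤ Ψ.card)
    (E : Finset (Fin (2 * ν))) (hE : E.Nonempty) (hE' : E ≠ Finset.univ)
    (hmin : min E.card Eᶜ.card = 2)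
    (hdec : ∀ σ ∈ Ψ, MapsCut ν σ E) :
    SplitsAcross (rvbPoly ν Ψ) E := by
  obtain ⟨s, u, hσs, hpair⟩ := key_lemma ν Ψ hΨ E hmin hdec
  set q0 : MvPolynomial (Fin (2 * ν)) ℂ := X (siteB ν u) - X (siteA ν s) with hq0
  set p0 : MvPolynomial (Fin (2 * ν)) ℂ :=
    ∑ σ ∈ Ψ, ∏ t ∈ Finset.univ.erase s, (X (siteB ν (σ t)) - X (siteA ν t)) with hp0
  have hfact : rvbPoly ν Ψ = q0 * p0 := by
    rw [hp0, Finset.mul_sum, rvbPoly]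
    refine Finset.sum_congr rfl fun σ hσ => ?_
    rw [covPoly, ← Finset.mul_prod_erase Finset.univ _ (Finset.mem_univ s), hσs σ hσ, hq0]
  have hq0vars : q0.vars ⊆ ({siteA ν s, siteB ν u} : Finset (Fin (2 * ν))) := by
    refine (vars_X_sub _ _).trans ?_
    intro x hx
    rcases Finset.mem_insert.1 hx with rfl | hx
    · simp
    · rw [Finset.mem_singleton] at hx; simp [hx]
  have hp0vars : p0.vars ⊆ ({siteA ν s, siteB ν u} : Finset (Fin (2 * ν)))ᶜ := by
    rw [hp0]
    refine (vars_sum_subset _ _).trans ?_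
    intro x hx
    obtain ⟨σ, hσ, hx⟩ := Finset.mem_biUnion.1 hx
    have hx2 := vars_prod (s := Finset.univ.erase s)
      (fun t => (X (siteB ν (σ t)) - X (siteA ν t) : MvPolynomial (Fin (2 * ν)) ℂ)) hx
    obtain ⟨t, ht, hx3⟩ := Finset.mem_biUnion.1 hx2
    have hts : t ≠ s := Finset.ne_of_mem_erase ht
    have hx4 := vars_X_sub (siteB ν (σ t)) (siteA ν t) hx3
    rw [Finset.mem_compl]
    intro hxmem
    rcases Finset.mem_insert.1 hx4 with rfl | hx5
    · rcases Finset.mem_insert.1 hxmem with h | h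
      · exact siteB_ne_siteA ν (σ t) s h
      · rw [Finset.mem_singleton] at h
        have : σ t = u := siteB_inj ν h
        rw [← hσs σ hσ] at this
        exact hts (σ.injective this)
    · rw [Finset.mem_singleton] at hx5
      subst hx5
      rcases Finset.mem_insert.1 hxmem with h | h
      · exact hts (siteA_inj ν h)
      · rw [Finset.mem_singleton] at h
        exact siteB_ne_siteA ν u t h.symm
  rcases hpair with hpE | hpEc
  · exact ⟨q0, p0, hfact, hpE ▸ hq0vars, hpE ▸ hp0vars⟩
  · refine ⟨p0, q0, hfact.trans (mul_comm q0 p0), ?_, hpEc ▸ hq0vars⟩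
    have : ({siteA ν s, siteB ν u} : Finset (Fin (2 * ν)))ᶜ = E := by
      rw [hpEc, compl_compl]
    exact this ▸ hp0vars
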